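/- In the stochastic volatility model: (a) for every x ∈ ℝ, ∫₀^∞ y p^{α,β}(x, y) dy = (α/β) ∫₀^∞ p^{α+1,β}(x, y) dy; and (b) the function a(x) = ∫₀^∞ y p^{α,β}(x, y) dy is differentiable with a′(x) = −x ∫₀^∞ p^{α,β}(x, y) dy for every x ∈ ℝ. Consequently, ½ (log a)′(x) = −(x/2) · ∫₀^∞ p^{α,β}(x, y) dy / ∫₀^∞ y p^{α,β}(x, y) dy. -/

import Mathlib

open MeasureTheory Real Set

/-
The factor `y` in `a(x) = ∫ y p^{α,β}(x, y) dy` is absorbed into the Gamma density: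
`y p^{α,β}(x, y) = (α/β) p^{α+1,β}(x, y)`, by `Γ(α + 1) = α Γ(α)`. For the derivative, only the
Gaussian factor depends on `x`, and `∂ₓ (y e^{-x²/(2y)}) = -x e^{-x²/(2y)}`; differentiation under
the integral sign is justified by the bound `p^{α,β}(x, y) ≤ p^{α,β}(0, y)`, whose right-hand side
is `C y^{α-3/2} e^{-βy}` and hence integrable on `(0, ∞)`.
-/

/-- The density `p^{α,β}(x, y)`: product of the `Gamma(α, β)` density in `y` with the
centered Gaussian density of variance `y` in `x`. -/
noncomputable def pab (α β : ℝ) (x y : ℝ) : ℝ :=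
  (2 * Real.pi * y) ^ (-(1 : ℝ) / 2) * Real.exp (-(x ^ 2) / (2 * y)) *
    (β ^ α / Real.Gamma α) * y ^ (α - 1) * Real.exp (-β * y)

section

variable {α β : ℝ}

lemma measurable_pab (α β x : ℝ) : Measurable (pab α β x) := by
  unfold pab; fun_prop

lemma pab_eq_pab_zero_mul_exp (α β x y : ℝ) :
    pab α β x y = pab α β 0 y * exp (-(x ^ 2) / (2 * y)) := by
  simp only [pab, sq, mul_zero, neg_zero, zero_div, exp_zero, mul_one]
  ring

lemma pab_pos (hα : 0 < α) (hβ : 0 < β) (x : ℝ) {y : ℝ} (hy : 0 < y) : 0 < pab α β x y := by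
  have := Gamma_pos_of_pos hα
  unfold pab
  positivity

lemma pab_le_pab_zero (hα : 0 < α) (hβ : 0 < β) (x : ℝ) {y : ℝ} (hy : 0 < y) :
    pab α β x y ≤ pab α β 0 y := by
  rw [pab_eq_pab_zero_mul_exp α β x y]
  refine mul_le_of_le_one_right (pab_pos hα hβ 0 hy).le (exp_le_one_iff.2 ?_)
  exact div_nonpos_of_nonpos_of_nonneg (neg_nonpos.2 (sq_nonneg x)) (by positivity)

lemma mul_pab_eq (hα : α ≠ 0) (hβ : β ≠ 0) (x : ℝ) {y : ℝ} (hy : y ≠ 0) :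
    y * pab α β x y = α / β * pab (α + 1) β x y := by
  have hpow : y ^ (α + 1 - 1) = y ^ (α - 1) * y := by
    rw [add_sub_cancel_right, ← rpow_add_one hy, sub_add_cancel]
  simp only [pab, Gamma_add_one hα, rpow_add_one hβ, hpow]
  field_simp

lemma pab_zero_eq (α β : ℝ) {y : ℝ} (hy : 0 < y) :
    pab α β 0 y =
      (2 * π) ^ (-(1 : ℝ) / 2) * (β ^ α / Gamma α) * (y ^ (α - 3 / 2) * exp (-β * y)) := by
  have hpow : y ^ (α - 3 / 2) = y ^ (-(1 : ℝ) / 2) * y ^ (α - 1) := by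
    rw [← rpow_add hy]; ring_nf
  simp only [pab, sq, mul_zero, neg_zero, zero_div, exp_zero, mul_one,
    mul_rpow (by positivity : (0 : ℝ) ≤ 2 * π) hy.le, hpow]
  ring

lemma integrableOn_pab (hα : 1 / 2 < α) (hβ : 0 < β) (x : ℝ) :
    IntegrableOn (pab α β x) (Ioi 0) := by
  have hα₀ : 0 < α := by linarith
  have hpow : IntegrableOn (fun y : ℝ => y ^ (α - 3 / 2) * exp (-β * y)) (Ioi 0) := by
    simpa using integrableOn_rpow_mul_exp_neg_mul_rpow (by linarith) one_pos hβ
  have hzero : IntegrableOn (pab α β 0) (Ioi 0) :=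
    IntegrableOn.congr_fun (hpow.const_mul _) (fun y hy => (pab_zero_eq α β hy).symm)
      measurableSet_Ioi
  refine hzero.mono' (measurable_pab α β x).aestronglyMeasurable ?_
  refine (ae_restrict_iff' measurableSet_Ioi).2 (.of_forall fun y (hy : 0 < y) => ?_)
  rw [norm_of_nonneg (pab_pos hα₀ hβ x hy).le]
  exact pab_le_pab_zero hα₀ hβ x hy

lemma integrableOn_mul_pab (hα : 1 / 2 < α) (hβ : 0 < β) (x : ℝ) :
    IntegrableOn (fun y => y * pab α β x y) (Ioi 0) := by
  have hα₀ : 0 < α := by linarith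
  exact IntegrableOn.congr_fun ((integrableOn_pab (by linarith) hβ x).const_mul (α / β))
    (fun y (hy : 0 < y) => (mul_pab_eq hα₀.ne' hβ.ne' x hy.ne').symm) measurableSet_Ioi

lemma setIntegral_mul_pab (hα : α ≠ 0) (hβ : β ≠ 0) (x : ℝ) :
    ∫ y in Ioi 0, y * pab α β x y = α / β * ∫ y in Ioi 0, pab (α + 1) β x y := by
  rw [← integral_const_mul]
  exact setIntegral_congr_fun measurableSet_Ioi fun y (hy : 0 < y) => mul_pab_eq hα hβ x hy.ne'

lemma hasDerivAt_mul_pab (α β : ℝ) {y : ℝ} (hy : y ≠ 0) (x : ℝ) :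
    HasDerivAt (fun x => y * pab α β x y) (-x * pab α β x y) x := by
  have hfun : (fun x => y * pab α β x y) = fun x => y * pab α β 0 y * exp (-(x ^ 2) / (2 * y)) :=
    funext fun x => by rw [pab_eq_pab_zero_mul_exp α β x y, mul_assoc]
  rw [hfun]
  refine ((((hasDerivAt_pow 2 x).fun_neg.div_const (2 * y)).exp).const_mul _).congr_deriv ?_
  rw [pab_eq_pab_zero_mul_exp α β x y]
  field_simp
  ring

lemma hasDerivAt_setIntegral_mul_pab (hα : 1 / 2 < α) (hβ : 0 < β) (x₀ : ℝ) :
    HasDerivAt (fun x => ∫ y in Ioi 0, y * pab α β x y)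
      (-x₀ * ∫ y in Ioi 0, pab α β x₀ y) x₀ := by
  have hα₀ : 0 < α := by linarith
  have hbound : ∀ᵐ y ∂volume.restrict (Ioi (0 : ℝ)), ∀ x ∈ Metric.ball x₀ 1,
      ‖-x * pab α β x y‖ ≤ (|x₀| + 1) * pab α β 0 y := by
    refine (ae_restrict_iff' measurableSet_Ioi).2 (.of_forall fun y (hy : 0 < y) x hx => ?_)
    have hx : |x| ≤ |x₀| + 1 := by
      have := abs_sub_abs_le_abs_sub x x₀
      rw [Metric.mem_ball, dist_eq] at hx
      linarith
    rw [norm_mul, norm_neg, norm_of_nonneg (pab_pos hα₀ hβ x hy).le, norm_eq_abs]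
    exact mul_le_mul hx (pab_le_pab_zero hα₀ hβ x hy) (pab_pos hα₀ hβ x hy).le (by positivity)
  have hderiv : ∀ᵐ y ∂volume.restrict (Ioi (0 : ℝ)), ∀ x ∈ Metric.ball x₀ 1,
      HasDerivAt (fun x => y * pab α β x y) (-x * pab α β x y) x :=
    (ae_restrict_iff' measurableSet_Ioi).2
      (.of_forall fun y (hy : 0 < y) x _ => hasDerivAt_mul_pab α β hy.ne' x)
  have h := (hasDerivAt_integral_of_dominated_loc_of_deriv_le (Metric.ball_mem_nhds x₀ one_pos)
    (.of_forall fun x => (measurable_id.mul (measurable_pab α β x)).aestronglyMeasurable)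
    (integrableOn_mul_pab hα hβ x₀)
    (measurable_const.mul (measurable_pab α β x₀)).aestronglyMeasurable
    hbound ((integrableOn_pab hα hβ 0).const_mul _) hderiv).2
  rwa [integral_const_mul] at h

lemma setIntegral_pab_pos (hα : 1 / 2 < α) (hβ : 0 < β) (x : ℝ) :
    0 < ∫ y in Ioi 0, pab α β x y := by
  have hα₀ : 0 < α := by linarith
  have hnonneg : 0 ≤ᵐ[volume.restrict (Ioi 0)] pab α β x :=
    (ae_restrict_iff' measurableSet_Ioi).2 (.of_forall fun y hy => (pab_pos hα₀ hβ x hy).le)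
  rw [setIntegral_pos_iff_support_of_nonneg_ae hnonneg (integrableOn_pab hα hβ x)]
  calc (0 : ENNReal) < volume (Ioi (0 : ℝ)) := by simp
    _ ≤ _ := measure_mono fun y (hy : 0 < y) => show y ∈ _ ∩ _ from ⟨(pab_pos hα₀ hβ x hy).ne', hy⟩

end

/-- In the stochastic volatility model:
(a) `∫₀^∞ y p^{α,β}(x, y) dy = (α/β) ∫₀^∞ p^{α+1,β}(x, y) dy` for every `x`;
(b) `a(x) = ∫₀^∞ y p^{α,β}(x, y) dy` is differentiable with
`a′(x) = −x ∫₀^∞ p^{α,β}(x, y) dy`; and consequently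
`½ (log a)′(x) = −(x/2) ∫₀^∞ p^{α,β}(x, y) dy / ∫₀^∞ y p^{α,β}(x, y) dy`. -/
theorem stochastic_volatility_marginal_strategy
    (α β : ℝ) (hα : 1 < α) (hβ : 0 < β) :
    (∀ x : ℝ, (∫ y in Set.Ioi (0 : ℝ), y * pab α β x y)
        = (α / β) * ∫ y in Set.Ioi (0 : ℝ), pab (α + 1) β x y) ∧
    (∀ x : ℝ, HasDerivAt (fun x' => ∫ y in Set.Ioi (0 : ℝ), y * pab α β x' y)
        (-x * ∫ y in Set.Ioi (0 : ℝ), pab α β x y) x) ∧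
    (∀ x : ℝ, (1 / 2 : ℝ) * deriv (fun x' => Real.log (∫ y in Set.Ioi (0 : ℝ), y * pab α β x' y)) x
        = -(x / 2) * (∫ y in Set.Ioi (0 : ℝ), pab α β x y)
            / (∫ y in Set.Ioi (0 : ℝ), y * pab α β x y)) := by
  have hα₀ : 0 < α := by linarith
  have hα' : 1 / 2 < α := by linarith
  refine ⟨setIntegral_mul_pab hα₀.ne' hβ.ne', hasDerivAt_setIntegral_mul_pab hα' hβ, fun x => ?_⟩
  have ha : 0 < ∫ y in Ioi 0, y * pab α β x y := by
    rw [setIntegral_mul_pab hα₀.ne' hβ.ne']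
    exact mul_pos (div_pos hα₀ hβ) (setIntegral_pab_pos (by linarith) hβ x)
  rw [((hasDerivAt_setIntegral_mul_pab hα' hβ x).log ha.ne').deriv]
  ring
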